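/- arXiv:2410.03669 — 5 statements merged into one kernel-verified Lean document; each statement's English description precedes it below -/
import Mathlib

section
/- For T₁ = [[z₁,0],[0,0]] and T₂ = [[0,0],[z₂,0]] with z₁, z₂ nonzero complex numbers, the joint q-numerical range JtW_q(T₁,T₂) ⊆ ℂ² is not convex, for any q with |q| ≤ 1. -/
open scoped InnerProductSpace

variable {H : Type*} [NormedAddCommGroup H] [InnerProductSpace ℂ H]

/-- The joint `q`-numerical range of a `d`-tuple of bounded operators:
`{(⟨T₁x,y⟩,…,⟨T_dx,y⟩) : ‖x‖ = ‖y‖ = 1, ⟨x,y⟩ = q}` (with `⟨x,y⟩` linear in `x`). -/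
def JtW {d : ℕ} (q : ℂ) (T : Fin d → H →L[ℂ] H) : Set (Fin d → ℂ) :=
  {z | ∃ x y : H, ‖x‖ = 1 ∧ ‖y‖ = 1 ∧ ⟪y, x⟫_ℂ = q ∧ z = fun i => ⟪y, (T i) x⟫_ℂ}

/-!
Writing `x = (a, b)` and `y = (c, d)`, the point of `JtW_q(T₁, T₂)` given by `x, y` is
`(z₁ c̄a, z₂ d̄a)`, and the origin always lies in the range. If `q ≠ 0`, the range contains
`(z₁ q, 0)`, but `(t z₁ q, 0)` with `0 < t < 1` would force `d̄a = 0` with `a ≠ 0`, so `d = 0` and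
`q = c̄a = t q`. If `q = 0`, the range contains `(0, z₂)`, but `(0, t z₂)` would force `c = 0`,
hence `b = 0` by orthogonality, and then `|d̄a| = 1 ≠ t`.
-/

open Matrix ComplexConjugate

lemma EuclideanSpace.norm_eq_one_iff_fin_two (x : EuclideanSpace ℂ (Fin 2)) :
    ‖x‖ = 1 ↔ ‖x 0‖ ^ 2 + ‖x 1‖ ^ 2 = 1 := by
  rw [← Fin.sum_univ_two (fun i => ‖x i‖ ^ 2), ← EuclideanSpace.norm_sq_eq,
    pow_eq_one_iff_of_nonneg (norm_nonneg x) two_ne_zero]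

lemma EuclideanSpace.inner_fin_two (x y : EuclideanSpace ℂ (Fin 2)) :
    ⟪y, x⟫_ℂ = conj (y 0) * x 0 + conj (y 1) * x 1 := by
  simp [EuclideanSpace.inner_eq_star_dotProduct, dotProduct, Fin.sum_univ_two, mul_comm]

lemma inner_toEuclideanCLM_fin_two (M : Matrix (Fin 2) (Fin 2) ℂ)
    (x y : EuclideanSpace ℂ (Fin 2)) :
    ⟪y, toEuclideanCLM (𝕜 := ℂ) M x⟫_ℂ =
      conj (y 0) * (M 0 0 * x 0 + M 0 1 * x 1) + conj (y 1) * (M 1 0 * x 0 + M 1 1 * x 1) := by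
  have hM : ∀ i, toEuclideanCLM (𝕜 := ℂ) M x i = ∑ j, M i j * x j := fun _ => rfl
  simp [EuclideanSpace.inner_fin_two, hM, Fin.sum_univ_two]

lemma mem_JtW_iff_coords (q z₁ z₂ : ℂ) (p : Fin 2 → ℂ) :
    p ∈ JtW q ![toEuclideanCLM (𝕜 := ℂ) !![z₁, 0; 0, 0], toEuclideanCLM (𝕜 := ℂ) !![0, 0; z₂, 0]] ↔
      ∃ a b c d : ℂ, ‖a‖ ^ 2 + ‖b‖ ^ 2 = 1 ∧ ‖c‖ ^ 2 + ‖d‖ ^ 2 = 1 ∧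
        conj c * a + conj d * b = q ∧ p = ![z₁ * (conj c * a), z₂ * (conj d * a)] := by
  have hp : ∀ x y : EuclideanSpace ℂ (Fin 2),
      (fun i => ⟪y, (![toEuclideanCLM (𝕜 := ℂ) !![z₁, 0; 0, 0],
        toEuclideanCLM (𝕜 := ℂ) !![0, 0; z₂, 0]] i) x⟫_ℂ) =
        ![z₁ * (conj (y 0) * x 0), z₂ * (conj (y 1) * x 0)] := by
    intro x y
    ext i
    fin_cases i <;> simp [inner_toEuclideanCLM_fin_two] <;> ring
  constructor
  · rintro ⟨x, y, hx, hy, hxy, rfl⟩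
    refine ⟨x 0, x 1, y 0, y 1, (EuclideanSpace.norm_eq_one_iff_fin_two x).1 hx,
      (EuclideanSpace.norm_eq_one_iff_fin_two y).1 hy, ?_, hp x y⟩
    rwa [← EuclideanSpace.inner_fin_two]
  · rintro ⟨a, b, c, d, hab, hcd, hq, rfl⟩
    refine ⟨!₂[a, b], !₂[c, d], ?_, ?_, ?_, ?_⟩
    · simpa [EuclideanSpace.norm_eq_one_iff_fin_two] using hab
    · simpa [EuclideanSpace.norm_eq_one_iff_fin_two] using hcd
    · simpa [EuclideanSpace.inner_fin_two] using hq
    · rw [hp]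
      simp

lemma norm_conj_mul_eq_one_of_orthogonal {a b c d : ℂ} (hab : ‖a‖ ^ 2 + ‖b‖ ^ 2 = 1)
    (hcd : ‖c‖ ^ 2 + ‖d‖ ^ 2 = 1) (horth : conj c * a + conj d * b = 0)
    (hca : conj c * a = 0) (hda : conj d * a ≠ 0) : ‖conj d * a‖ = 1 := by
  have ha : a ≠ 0 := right_ne_zero_of_mul hda
  have hd : conj d ≠ 0 := left_ne_zero_of_mul hda
  have hc : c = 0 := by simpa [ha] using hca
  have hb : b = 0 := by simpa [hca, hd] using horth
  simp only [hb, hc, norm_zero, zero_pow two_ne_zero, add_zero, zero_add] at hab hcd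
  rw [norm_mul, Complex.norm_conj, (pow_eq_one_iff_of_nonneg (norm_nonneg d) two_ne_zero).1 hcd,
    (pow_eq_one_iff_of_nonneg (norm_nonneg a) two_ne_zero).1 hab, one_mul]

lemma smul_notMem_JtW_of_ne_zero {q z₁ z₂ : ℂ} (hq : q ≠ 0) (h₁ : z₁ ≠ 0) (h₂ : z₂ ≠ 0)
    {t : ℝ} (ht : t ∈ Set.Ioo 0 1) :
    t • ![z₁ * q, 0] ∉
      JtW q ![toEuclideanCLM (𝕜 := ℂ) !![z₁, 0; 0, 0], toEuclideanCLM (𝕜 := ℂ) !![0, 0; z₂, 0]] := by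
  rw [mem_JtW_iff_coords]
  rintro ⟨a, b, c, d, -, -, hinner, hp⟩
  have h0 : (t : ℂ) * (z₁ * q) = z₁ * (conj c * a) := by simpa using congrFun hp 0
  have h1 : d = 0 ∨ a = 0 := by simpa [h₂] using congrFun hp 1
  have hca : conj c * a = t * q := mul_left_cancel₀ h₁ (by linear_combination -h0)
  have ha : a ≠ 0 := by
    rintro rfl
    simp [hq, ht.1.ne'] at hca
  have htq : (t : ℂ) * q = q := by simpa [h1.resolve_right ha, hca] using hinner
  have ht1 : (t : ℂ) = 1 := mul_right_cancel₀ hq (by rw [htq, one_mul])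
  exact ht.2.ne (mod_cast ht1)

lemma smul_notMem_JtW_zero {z₁ z₂ : ℂ} (h₁ : z₁ ≠ 0) (h₂ : z₂ ≠ 0)
    {t : ℝ} (ht : t ∈ Set.Ioo 0 1) :
    t • ![0, z₂] ∉
      JtW 0 ![toEuclideanCLM (𝕜 := ℂ) !![z₁, 0; 0, 0], toEuclideanCLM (𝕜 := ℂ) !![0, 0; z₂, 0]] := by
  rw [mem_JtW_iff_coords]
  rintro ⟨a, b, c, d, hab, hcd, horth, hp⟩
  have h0 : conj c * a = 0 := by simpa [h₁] using (congrFun hp 0).symm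
  have h1 : (t : ℂ) * z₂ = z₂ * (conj d * a) := by simpa using congrFun hp 1
  have hda : conj d * a = t := mul_left_cancel₀ h₂ (by linear_combination -h1)
  have hnorm := norm_conj_mul_eq_one_of_orthogonal hab hcd horth h0
    (by rw [hda]; exact_mod_cast ht.1.ne')
  rw [hda, Complex.norm_real, Real.norm_of_nonneg ht.1.le] at hnorm
  exact ht.2.ne hnorm

lemma zero_mem_JtW {q : ℂ} (hq : ‖q‖ ≤ 1) (z₁ z₂ : ℂ) :
    0 ∈ JtW q ![toEuclideanCLM (𝕜 := ℂ) !![z₁, 0; 0, 0], toEuclideanCLM (𝕜 := ℂ) !![0, 0; z₂, 0]] := by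
  have hs : √(1 - ‖q‖ ^ 2) ^ 2 = 1 - ‖q‖ ^ 2 := Real.sq_sqrt (by nlinarith [norm_nonneg q])
  rw [mem_JtW_iff_coords]
  refine ⟨0, 1, √(1 - ‖q‖ ^ 2), conj q, by simp, by simp [hs], by simp, ?_⟩
  ext i; fin_cases i <;> simp

lemma mem_JtW_of_norm_le_one {q : ℂ} (hq : ‖q‖ ≤ 1) (z₁ z₂ : ℂ) :
    ![z₁ * q, 0] ∈
      JtW q ![toEuclideanCLM (𝕜 := ℂ) !![z₁, 0; 0, 0], toEuclideanCLM (𝕜 := ℂ) !![0, 0; z₂, 0]] := by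
  have hs : √(1 - ‖q‖ ^ 2) ^ 2 = 1 - ‖q‖ ^ 2 := Real.sq_sqrt (by nlinarith [norm_nonneg q])
  rw [mem_JtW_iff_coords]
  exact ⟨q, √(1 - ‖q‖ ^ 2), 1, 0, by simp [hs], by simp, by simp, by simp⟩

lemma mem_JtW_zero (z₁ z₂ : ℂ) :
    ![0, z₂] ∈
      JtW 0 ![toEuclideanCLM (𝕜 := ℂ) !![z₁, 0; 0, 0], toEuclideanCLM (𝕜 := ℂ) !![0, 0; z₂, 0]] := by
  rw [mem_JtW_iff_coords]
  exact ⟨1, 0, 0, 1, by simp, by simp, by simp, by simp⟩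

theorem stmt_9 (q : ℂ) (hq : ‖q‖ ≤ 1) (z₁ z₂ : ℂ) (h₁ : z₁ ≠ 0) (h₂ : z₂ ≠ 0) :
    ¬ Convex ℝ (JtW q ![Matrix.toEuclideanCLM (𝕜 := ℂ) !![z₁, 0; 0, 0],
        Matrix.toEuclideanCLM (𝕜 := ℂ) !![0, 0; z₂, 0]]) := by
  intro hconv
  have half : (1 / 2 : ℝ) ∈ Set.Ioo 0 1 := by norm_num
  by_cases hq0 : q = 0
  · subst hq0
    exact smul_notMem_JtW_zero h₁ h₂ half <| hconv.smul_mem_of_zero_mem (zero_mem_JtW hq z₁ z₂)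
      (mem_JtW_zero z₁ z₂) (Set.Ioo_subset_Icc_self half)
  · exact smul_notMem_JtW_of_ne_zero hq0 h₁ h₂ half <| hconv.smul_mem_of_zero_mem
      (zero_mem_JtW hq z₁ z₂) (mem_JtW_of_norm_le_one hq z₁ z₂) (Set.Ioo_subset_Icc_self half)
end

section
/- Let T = (T₁,…,T_d) be a d-tuple of commuting bounded operators. Then q·σ_p(T) ⊆ JtW_q(T), where σ_p(T) is the joint point spectrum. -/
/-! If `T x = ξ x` for a unit vector `x` and `⟪y, x⟫ = q`, then `⟪y, T x⟫ = q ξ`; so everything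
reduces to finding, for a unit vector `u` and `‖q‖ ≤ 1`, a unit vector `y` with `⟪y, u⟫ = q`.
When `dim H ≥ 2` there is a unit vector `e ⟂ u`, and `y = q̄ u + √(1 - ‖q‖²) e` works. -/

open scoped InnerProductSpace

variable {H : Type*} [NormedAddCommGroup H] [InnerProductSpace ℂ H]

open scoped ComplexConjugate

section InnerProductSpace

variable {𝕜 E : Type*} [RCLike 𝕜] [NormedAddCommGroup E] [InnerProductSpace 𝕜 E]

lemma span_singleton_ne_top_of_two_le_rank (hdim : 2 ≤ Module.rank 𝕜 E) (u : E) :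
    (𝕜 ∙ u) ≠ ⊤ := by
  intro h
  have hle : Module.rank 𝕜 (𝕜 ∙ u) ≤ 1 := by simpa using rank_span_le ({u} : Set E)
  rw [h, rank_top] at hle
  exact absurd (hdim.trans hle) (by norm_num)

lemma exists_norm_eq_one_inner_eq_zero (hdim : 2 ≤ Module.rank 𝕜 E) (u : E) :
    ∃ e : E, ‖e‖ = 1 ∧ ⟪u, e⟫_𝕜 = 0 := by
  obtain ⟨w, hw, hw0⟩ := (Submodule.ne_bot_iff _).1 <|
    mt Submodule.orthogonal_eq_bot_iff.1 (span_singleton_ne_top_of_two_le_rank hdim u)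
  refine ⟨(‖w‖⁻¹ : 𝕜) • w, norm_smul_inv_norm hw0, ?_⟩
  rw [inner_smul_right, Submodule.mem_orthogonal_singleton_iff_inner_right.1 hw, mul_zero]

lemma exists_norm_eq_one_inner_eq (hdim : 2 ≤ Module.rank 𝕜 E) {u : E} (hu : ‖u‖ = 1)
    {q : 𝕜} (hq : ‖q‖ ≤ 1) : ∃ y : E, ‖y‖ = 1 ∧ ⟪y, u⟫_𝕜 = q := by
  obtain ⟨e, he, hue⟩ := exists_norm_eq_one_inner_eq_zero hdim u
  have hc : (0 : ℝ) ≤ 1 - ‖q‖ ^ 2 := by nlinarith [norm_nonneg q]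
  set c : ℝ := √(1 - ‖q‖ ^ 2)
  have horth : ⟪conj q • u, (c : 𝕜) • e⟫_𝕜 = 0 := by
    rw [inner_smul_left, inner_smul_right, hue, mul_zero, mul_zero]
  refine ⟨conj q • u + (c : 𝕜) • e, ?_, ?_⟩
  · have hsq : ‖conj q • u + (c : 𝕜) • e‖ * ‖conj q • u + (c : 𝕜) • e‖ = 1 := by
      rw [norm_add_sq_eq_norm_sq_add_norm_sq_of_inner_eq_zero _ _ horth, norm_smul, norm_smul,
        hu, he, RCLike.norm_conj, RCLike.norm_ofReal, abs_of_nonneg (Real.sqrt_nonneg _),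
        mul_one, mul_one, Real.mul_self_sqrt hc]
      ring
    nlinarith [norm_nonneg (conj q • u + (c : 𝕜) • e)]
  · have heu : ⟪e, u⟫_𝕜 = 0 := by rw [← inner_conj_symm, hue, map_zero]
    rw [inner_add_left, inner_smul_left, inner_smul_left, heu, inner_self_eq_norm_sq_to_K, hu]
    simp

lemma exists_norm_eq_one_common_eigenvector {ι : Type*} {T : ι → E →L[𝕜] E} {ξ : ι → 𝕜}
    {x : E} (hx : x ≠ 0) (hξ : ∀ i, T i x = ξ i • x) :
    ∃ u : E, ‖u‖ = 1 ∧ ∀ i, T i u = ξ i • u :=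
  ⟨(‖x‖⁻¹ : 𝕜) • x, norm_smul_inv_norm hx, fun i => by rw [map_smul, hξ i, smul_comm]⟩

end InnerProductSpace

theorem stmt_10_general {d : ℕ} (hdim : 2 ≤ Module.rank ℂ H) (q : ℂ) (hq : ‖q‖ ≤ 1)
    (T : Fin d → H →L[ℂ] H) :
    (fun ξ : Fin d → ℂ => fun i => q * ξ i) ''
        {ξ : Fin d → ℂ | ∃ x : H, x ≠ 0 ∧ ∀ i, T i x = ξ i • x} ⊆ JtW q T := by
  rintro _ ⟨ξ, ⟨x, hx, hξ⟩, rfl⟩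
  obtain ⟨u, hu, hTu⟩ := exists_norm_eq_one_common_eigenvector hx hξ
  obtain ⟨y, hy, hyu⟩ := exists_norm_eq_one_inner_eq hdim hu hq
  refine ⟨u, y, hu, hy, hyu, funext fun i => ?_⟩
  rw [hTu i, inner_smul_right, hyu, mul_comm]

theorem stmt_10 {d : ℕ} (hdim : 2 ≤ Module.rank ℂ H) (q : ℂ) (hq : ‖q‖ ≤ 1)
    (T : Fin d → H →L[ℂ] H) (hcomm : ∀ i j, Commute (T i) (T j)) :
    (fun ξ : Fin d → ℂ => fun i => q * ξ i) ''
        {ξ : Fin d → ℂ | ∃ x : H, x ≠ 0 ∧ ∀ i, T i x = ξ i • x} ⊆ JtW q T :=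
  stmt_10_general hdim q hq T
end

section
/- The joint q-numerical radius Jtω_q(·) is a seminorm on B(H)^d; moreover Jtω_q(·) is a norm on B(H)^d if and only if the single-operator q-numerical radius ω_q(·) is a norm on B(H). -/
/-!
Both radii are suprema over the same set of pairs of unit vectors `(x, y)` with `⟪y, x⟫ = q`:
`Jtw q T` is the supremum of the Euclidean norm of the vector `(⟪y, Tᵢ x⟫)ᵢ`, which depends
linearly on `T`, so the seminorm axioms hold pair by pair and pass to the supremum.
Definiteness transfers through `wq q (T i) ≤ Jtw q T` and `Jtw q (S, …, S) = √d * wq q S`.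
-/

open scoped InnerProductSpace

variable {H : Type*} [NormedAddCommGroup H] [InnerProductSpace ℂ H]

/-- The joint `q`-numerical radius. -/
noncomputable def Jtw {d : ℕ} (q : ℂ) (T : Fin d → H →L[ℂ] H) : ℝ :=
  sSup {r | ∃ x y : H, ‖x‖ = 1 ∧ ‖y‖ = 1 ∧ ⟪y, x⟫_ℂ = q ∧
    r = Real.sqrt (∑ i, ‖⟪y, (T i) x⟫_ℂ‖ ^ 2)}

/-- The single-operator `q`-numerical radius. -/
noncomputable def wq (q : ℂ) (S : H →L[ℂ] H) : ℝ :=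
  sSup {r | ∃ x y : H, ‖x‖ = 1 ∧ ‖y‖ = 1 ∧ ⟪y, x⟫_ℂ = q ∧ r = ‖⟪y, S x⟫_ℂ‖}

variable (H) in
def unitPairs (q : ℂ) : Set (H × H) := {p | ‖p.1‖ = 1 ∧ ‖p.2‖ = 1 ∧ ⟪p.2, p.1⟫_ℂ = q}

noncomputable def jointInner {d : ℕ} (T : Fin d → H →L[ℂ] H) (x y : H) :
    EuclideanSpace ℂ (Fin d) :=
  WithLp.toLp 2 fun i => ⟪y, T i x⟫_ℂ

section jointInner

variable {d : ℕ}

lemma norm_jointInner (T : Fin d → H →L[ℂ] H) (x y : H) :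
    ‖jointInner T x y‖ = √(∑ i, ‖⟪y, T i x⟫_ℂ‖ ^ 2) :=
  EuclideanSpace.norm_eq _

lemma jointInner_smul (c : ℂ) (T : Fin d → H →L[ℂ] H) (x y : H) :
    jointInner (c • T) x y = c • jointInner T x y := by
  ext i
  simp [jointInner]

lemma jointInner_add (T S : Fin d → H →L[ℂ] H) (x y : H) :
    jointInner (T + S) x y = jointInner T x y + jointInner S x y := by
  ext i
  simp [jointInner]

lemma norm_jointInner_const (S : H →L[ℂ] H) (x y : H) :
    ‖jointInner (fun _ : Fin d => S) x y‖ = √d * ‖⟪y, S x⟫_ℂ‖ := by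
  rw [norm_jointInner, Finset.sum_const, Finset.card_univ, Fintype.card_fin, nsmul_eq_mul,
    Real.sqrt_mul (Nat.cast_nonneg d), Real.sqrt_sq (norm_nonneg _)]

lemma norm_jointInner_le (T : Fin d → H →L[ℂ] H) {x y : H} (hx : ‖x‖ = 1) (hy : ‖y‖ = 1) :
    ‖jointInner T x y‖ ≤ √(∑ i, ‖T i‖ ^ 2) := by
  rw [norm_jointInner]
  gcongr with i
  calc ‖⟪y, T i x⟫_ℂ‖ ≤ ‖y‖ * (‖T i‖ * ‖x‖) :=
        (norm_inner_le_norm _ _).trans (by gcongr; exact (T i).le_opNorm x)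
    _ = ‖T i‖ := by rw [hx, hy, one_mul, mul_one]

end jointInner

section radii

variable {d : ℕ} (q : ℂ)

lemma sSup_eq_iSup_unitPairs (f : H → H → ℝ) :
    sSup {r | ∃ x y : H, ‖x‖ = 1 ∧ ‖y‖ = 1 ∧ ⟪y, x⟫_ℂ = q ∧ r = f x y} =
      ⨆ p : unitPairs H q, f p.1.1 p.1.2 := by
  rw [iSup]
  congr 1
  ext r
  constructor
  · rintro ⟨x, y, hx, hy, hxy, rfl⟩
    exact ⟨⟨(x, y), hx, hy, hxy⟩, rfl⟩
  · rintro ⟨⟨⟨x, y⟩, hx, hy, hxy⟩, rfl⟩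
    exact ⟨x, y, hx, hy, hxy, rfl⟩

lemma Jtw_eq_iSup (T : Fin d → H →L[ℂ] H) :
    Jtw q T = ⨆ p : unitPairs H q, ‖jointInner T p.1.1 p.1.2‖ := by
  simp only [Jtw, ← norm_jointInner]
  exact sSup_eq_iSup_unitPairs q _

lemma wq_eq_iSup (S : H →L[ℂ] H) :
    wq q S = ⨆ p : unitPairs H q, ‖⟪p.1.2, S p.1.1⟫_ℂ‖ :=
  sSup_eq_iSup_unitPairs q _

lemma Jtw_nonneg (T : Fin d → H →L[ℂ] H) : 0 ≤ Jtw q T := by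
  rw [Jtw_eq_iSup]
  exact Real.iSup_nonneg fun _ => norm_nonneg _

lemma wq_nonneg (S : H →L[ℂ] H) : 0 ≤ wq q S := by
  rw [wq_eq_iSup]
  exact Real.iSup_nonneg fun _ => norm_nonneg _

lemma norm_jointInner_le_Jtw (T : Fin d → H →L[ℂ] H) (p : unitPairs H q) :
    ‖jointInner T p.1.1 p.1.2‖ ≤ Jtw q T := by
  rw [Jtw_eq_iSup]
  exact le_ciSup ⟨_, Set.forall_mem_range.2 fun p => norm_jointInner_le T p.2.1 p.2.2.1⟩ p

lemma Jtw_smul (c : ℂ) (T : Fin d → H →L[ℂ] H) : Jtw q (c • T) = ‖c‖ * Jtw q T := by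
  simp only [Jtw_eq_iSup, jointInner_smul, norm_smul, Real.mul_iSup_of_nonneg (norm_nonneg c)]

lemma Jtw_add_le (T S : Fin d → H →L[ℂ] H) : Jtw q (T + S) ≤ Jtw q T + Jtw q S := by
  rw [Jtw_eq_iSup q (T + S)]
  refine Real.iSup_le (fun p => ?_) (add_nonneg (Jtw_nonneg q T) (Jtw_nonneg q S))
  rw [jointInner_add]
  exact (norm_add_le _ _).trans
    (add_le_add (norm_jointInner_le_Jtw q T p) (norm_jointInner_le_Jtw q S p))

lemma wq_le_Jtw (T : Fin d → H →L[ℂ] H) (i : Fin d) : wq q (T i) ≤ Jtw q T := by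
  rw [wq_eq_iSup]
  exact Real.iSup_le (fun p => (PiLp.norm_apply_le (jointInner T p.1.1 p.1.2) i).trans
    (norm_jointInner_le_Jtw q T p)) (Jtw_nonneg q T)

lemma Jtw_const (S : H →L[ℂ] H) : Jtw q (fun _ : Fin d => S) = √d * wq q S := by
  simp only [Jtw_eq_iSup, wq_eq_iSup, norm_jointInner_const,
    Real.mul_iSup_of_nonneg (Real.sqrt_nonneg _)]

end radii

theorem stmt_12_general {d : ℕ} (hd : 0 < d) (q : ℂ) :
    (∀ T : Fin d → H →L[ℂ] H, 0 ≤ Jtw q T) ∧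
    (∀ (c : ℂ) (T : Fin d → H →L[ℂ] H), Jtw q (c • T) = ‖c‖ * Jtw q T) ∧
    (∀ T S : Fin d → H →L[ℂ] H, Jtw q (T + S) ≤ Jtw q T + Jtw q S) ∧
    ((∀ T : Fin d → H →L[ℂ] H, Jtw q T = 0 → T = 0) ↔
      (∀ S : H →L[ℂ] H, wq q S = 0 → S = 0)) := by
  refine ⟨Jtw_nonneg q, Jtw_smul q, Jtw_add_le q, fun hJ S hS => ?_, fun hw T hT => ?_⟩
  · have hconst : Jtw q (fun _ : Fin d => S) = 0 := by rw [Jtw_const, hS, mul_zero]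
    exact congrFun (hJ _ hconst) ⟨0, hd⟩
  · funext i
    exact hw _ (le_antisymm (hT ▸ wq_le_Jtw q T i) (wq_nonneg q _))

theorem stmt_12 {d : ℕ} (hd : 0 < d) (hdim : 2 ≤ Module.rank ℂ H) (q : ℂ)
    (hq : ‖q‖ ≤ 1) :
    (∀ T : Fin d → H →L[ℂ] H, 0 ≤ Jtw q T) ∧
    (∀ (c : ℂ) (T : Fin d → H →L[ℂ] H), Jtw q (c • T) = ‖c‖ * Jtw q T) ∧
    (∀ T S : Fin d → H →L[ℂ] H, Jtw q (T + S) ≤ Jtw q T + Jtw q S) ∧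
    ((∀ T : Fin d → H →L[ℂ] H, Jtw q T = 0 → T = 0) ↔
      (∀ S : H →L[ℂ] H, wq q S = 0 → S = 0)) :=
  stmt_12_general hd q
end

section
/- Let A be a positive bounded operator on H with dim R(A) = 1 and T ∈ B(H). Then the A-q-numerical range W_{q,A}(T) is nonempty if and only if |q| = 1. -/
open scoped InnerProductSpace

variable {H : Type*} [NormedAddCommGroup H] [InnerProductSpace ℂ H]

/-- The semi-inner product `⟨x,y⟩_A = ⟨Ax,y⟩` induced by a positive operator `A`
(linear in the first argument, as in the paper). -/
noncomputable def innA (A : H →L[ℂ] H) (x y : H) : ℂ := ⟪y, A x⟫_ℂ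

/-- The seminorm `‖x‖_A = ⟨x,x⟩_A^{1/2}` induced by a positive operator `A`. -/
noncomputable def normA (A : H →L[ℂ] H) (x : H) : ℝ := Real.sqrt (⟪x, A x⟫_ℂ).re

/-- The `A`-`q`-numerical range `W_{q,A}(T) = {⟨Tx,y⟩_A : ‖x‖_A = ‖y‖_A = 1, ⟨x,y⟩_A = q}`. -/
def WqA (q : ℂ) (A T : H →L[ℂ] H) : Set ℂ :=
  {z | ∃ x y : H, normA A x = 1 ∧ normA A y = 1 ∧ innA A x y = q ∧ z = innA A (T x) y}

/-- The `A`-`q`-numerical radius. -/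
noncomputable def wqA (q : ℂ) (A T : H →L[ℂ] H) : ℝ :=
  sSup {r | ∃ x y : H, normA A x = 1 ∧ normA A y = 1 ∧ innA A x y = q ∧
    r = ‖innA A (T x) y‖}

/-! If the range of `A` is spanned by `u`, write `A z = c(z) • u`; then
`⟨x,y⟩_A ⟨y,x⟩_A = ⟨x,x⟩_A ⟨y,y⟩_A`, so the Cauchy–Schwarz inequality for `⟨·,·⟩_A` is always an
equality, `|⟨x,y⟩_A| = ‖x‖_A ‖y‖_A`, and two `A`-unit vectors have `|⟨x,y⟩_A| = 1`.
Conversely, if `|q| = 1`, then any `A`-unit vector `x` (one exists since `A ≠ 0`) and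
`y = q̄ x` satisfy `⟨x,y⟩_A = q`. -/

open ComplexConjugate

section

variable (A : H →L[ℂ] H)

theorem innA_smul_right (c : ℂ) (x y : H) : innA A x (c • y) = conj c * innA A x y :=
  inner_smul_left y (A x) c

theorem normA_smul (c : ℂ) (x : H) : normA A (c • x) = ‖c‖ * normA A x := by
  have h : (⟪c • x, A (c • x)⟫_ℂ).re = ‖c‖ ^ 2 * (⟪x, A x⟫_ℂ).re := by
    rw [map_smul, inner_smul_left, inner_smul_right, ← mul_assoc, Complex.conj_mul',
      ← Complex.ofReal_pow, Complex.re_ofReal_mul]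
  rw [normA, normA, h, Real.sqrt_mul (sq_nonneg _), Real.sqrt_sq (norm_nonneg c)]

theorem normA_nonneg (x : H) : 0 ≤ normA A x :=
  Real.sqrt_nonneg _

theorem innA_mul_innA_swap_of_rank_le_one
    (hrank : Module.rank ℂ (LinearMap.range (A : H →ₗ[ℂ] H)) ≤ 1) (x y : H) :
    innA A x y * innA A y x = innA A x x * innA A y y := by
  obtain ⟨u, hu⟩ := rank_le_one_iff.mp hrank
  obtain ⟨cx, hx⟩ := hu ⟨A x, LinearMap.mem_range_self _ x⟩
  obtain ⟨cy, hy⟩ := hu ⟨A y, LinearMap.mem_range_self _ y⟩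
  have hx' : A x = cx • (u : H) := (congrArg Subtype.val hx).symm
  have hy' : A y = cy • (u : H) := (congrArg Subtype.val hy).symm
  simp only [innA, hx', hy', inner_smul_right]
  ring

variable {A}

theorem innA_swap_of_isSymmetric (hA : (A : H →ₗ[ℂ] H).IsSymmetric) (x y : H) :
    innA A y x = conj (innA A x y) :=
  (hA x y).symm.trans (inner_conj_symm (A x) y).symm

theorem innA_self_eq_normA_sq (hA : A.IsPositive) (x : H) :
    innA A x x = ((normA A x ^ 2 : ℝ) : ℂ) := by
  obtain ⟨-, him⟩ := RCLike.nonneg_iff.mp (hA.inner_nonneg_right x)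
  have hre : 0 ≤ (⟪x, A x⟫_ℂ).re := hA.re_inner_nonneg_right x
  rw [normA, Real.sq_sqrt hre]
  exact Complex.ext rfl him

theorem norm_innA_of_rank_le_one (hA : A.IsPositive)
    (hrank : Module.rank ℂ (LinearMap.range (A : H →ₗ[ℂ] H)) ≤ 1) (x y : H) :
    ‖innA A x y‖ = normA A x * normA A y := by
  have h := innA_mul_innA_swap_of_rank_le_one A hrank x y
  rw [innA_swap_of_isSymmetric hA.isSymmetric x y, Complex.mul_conj', innA_self_eq_normA_sq hA,
    innA_self_eq_normA_sq hA, ← Complex.ofReal_mul, ← Complex.ofReal_pow] at h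
  have h' : ‖innA A x y‖ ^ 2 = (normA A x * normA A y) ^ 2 := by
    rw [mul_pow]; exact_mod_cast h
  exact (pow_left_inj₀ (norm_nonneg _)
    (mul_nonneg (normA_nonneg A x) (normA_nonneg A y)) two_ne_zero).mp h'

theorem exists_normA_eq_one (hA : A.IsPositive) (hA0 : A ≠ 0) : ∃ x, normA A x = 1 := by
  obtain ⟨x, hx⟩ : ∃ x, normA A x ≠ 0 := by
    by_contra! h
    refine hA0 (ContinuousLinearMap.coe_injective (hA.isSymmetric.inner_map_self_eq_zero.mp
      fun x => (hA.isSymmetric x x).trans ?_))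
    simpa [innA, h x] using innA_self_eq_normA_sq hA x
  refine ⟨((normA A x)⁻¹ : ℂ) • x, ?_⟩
  rw [normA_smul, norm_inv, Complex.norm_real, Real.norm_eq_abs,
    abs_of_nonneg (normA_nonneg A x), inv_mul_cancel₀ hx]

end

theorem WqA_nonempty_of_norm_eq_one {A : H →L[ℂ] H} (hA : A.IsPositive) (hA0 : A ≠ 0)
    {q : ℂ} (hq : ‖q‖ = 1) (T : H →L[ℂ] H) : (WqA q A T).Nonempty := by
  obtain ⟨x, hx⟩ := exists_normA_eq_one hA hA0
  refine ⟨_, x, conj q • x, hx, ?_, ?_, rfl⟩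
  · rw [normA_smul, Complex.norm_conj, hq, hx, one_mul]
  · rw [innA_smul_right, Complex.conj_conj, innA_self_eq_normA_sq hA, hx]
    simp

theorem norm_eq_one_of_WqA_nonempty {A : H →L[ℂ] H} (hA : A.IsPositive)
    (hrank : Module.rank ℂ (LinearMap.range (A : H →ₗ[ℂ] H)) ≤ 1) {q : ℂ} {T : H →L[ℂ] H}
    (hW : (WqA q A T).Nonempty) : ‖q‖ = 1 := by
  obtain ⟨-, x, y, hx, hy, rfl, -⟩ := hW
  rw [norm_innA_of_rank_le_one hA hrank, hx, hy, one_mul]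

theorem stmt_17_general (A : H →L[ℂ] H) (hA : A.IsPositive)
    (hrank : Module.rank ℂ (LinearMap.range (A : H →ₗ[ℂ] H)) = 1)
    (q : ℂ) (T : H →L[ℂ] H) :
    (WqA q A T).Nonempty ↔ ‖q‖ = 1 := by
  have hA0 : A ≠ 0 := by
    rintro rfl
    simp at hrank
  exact ⟨norm_eq_one_of_WqA_nonempty hA hrank.le,
    fun hq => WqA_nonempty_of_norm_eq_one hA hA0 hq T⟩

theorem stmt_17 [CompleteSpace H] (A : H →L[ℂ] H) (hA : A.IsPositive)
    (hrank : Module.rank ℂ (LinearMap.range (A : H →ₗ[ℂ] H)) = 1)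
    (q : ℂ) (hq : ‖q‖ ≤ 1) (T : H →L[ℂ] H) :
    (WqA q A T).Nonempty ↔ ‖q‖ = 1 :=
  stmt_17_general A hA hrank q T
end

section
/- Let A be a positive operator on H with dim R(A) ≥ 2, |q| ≤ 1, and let T, S be A^{1/2}-bounded operators. Then w_{q,A}(T+S) = w_{q,A}(T) + w_{q,A}(S) holds if and only if there exists a sequence (xₙ, yₙ) in S_{q,A}(H) such that lim_{n→∞} Re(⟨yₙ, Txₙ⟩_A · ⟨Sxₙ, yₙ⟩_A) = w_{q,A}(T)·w_{q,A}(S). -/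
open scoped InnerProductSpace

variable {H : Type*} [NormedAddCommGroup H] [InnerProductSpace ℂ H]

/-!
Write `A = B * B` with `B = A^{1/2}`; then `⟨x, y⟩_A = ⟪B y, B x⟫` and `‖x‖_A = ‖B x‖`, so the
rank hypothesis yields a `B`-orthonormal pair and hence a point of `S_{q,A}(H)`, and `w_{q,A}(T)` is
the supremum of `‖t‖` over a nonempty bounded family `t` of complex numbers.
Since `⟨y, T x⟩_A = conj ⟨T x, y⟩_A`, the statement is about such families `t`, `s` with suprema
`α`, `β`. The identity `‖t + s‖² = ‖t‖² + ‖s‖² + 2 Re (conj t * s)` does the rest: along a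
sequence, `‖t + s‖ → α + β` forces `‖t‖ → α`, `‖s‖ → β` and so `Re (conj t * s) → α β`;
conversely, `Re (conj t * s) ≤ ‖t‖ ‖s‖` turns `Re (conj t * s) → α β` into `‖t‖ → α`, `‖s‖ → β`
when `α, β > 0`, while `α = 0` or `β = 0` makes one family vanish.
-/

open scoped ComplexConjugate
open Filter Topology

lemma Complex.norm_add_sq_eq (z w : ℂ) :
    ‖z + w‖ ^ 2 = ‖z‖ ^ 2 + ‖w‖ ^ 2 + 2 * (conj z * w).re := by
  rw [norm_add_sq (𝕜 := ℂ), RCLike.inner_apply']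
  exact add_right_comm _ _ _

lemma Complex.re_conj_mul_comm (z w : ℂ) : (conj z * w).re = (conj w * z).re := by
  rw [← Complex.conj_re, map_mul, Complex.conj_conj, mul_comm]

section
variable {ι : Type*} {l : Filter ι} {t s : ι → ℂ} {α β : ℝ}

lemma tendsto_norm_left_of_tendsto_norm_add (ht : ∀ i, ‖t i‖ ≤ α) (hs : ∀ i, ‖s i‖ ≤ β)
    (h : Tendsto (fun i => ‖t i + s i‖) l (𝓝 (α + β))) : Tendsto (fun i => ‖t i‖) l (𝓝 α) := by
  refine tendsto_of_tendsto_of_tendsto_of_le_of_le (by simpa using h.sub_const β)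
    tendsto_const_nhds (fun i => ?_) ht
  linarith [norm_add_le (t i) (s i), hs i]

lemma tendsto_re_conj_mul_of_tendsto_norm_add (ht : ∀ i, ‖t i‖ ≤ α) (hs : ∀ i, ‖s i‖ ≤ β)
    (h : Tendsto (fun i => ‖t i + s i‖) l (𝓝 (α + β))) :
    Tendsto (fun i => (conj (t i) * s i).re) l (𝓝 (α * β)) := by
  have hα := tendsto_norm_left_of_tendsto_norm_add ht hs h
  have hβ := tendsto_norm_left_of_tendsto_norm_add hs ht (by simpa only [add_comm] using h)
  convert ((h.pow 2 |>.sub (hα.pow 2)).sub (hβ.pow 2)).div_const 2 using 1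
  · funext i
    rw [Complex.norm_add_sq_eq]
    ring
  · congr 1
    ring

lemma tendsto_norm_left_of_tendsto_re_conj_mul (hβ : 0 < β) (ht : ∀ i, ‖t i‖ ≤ α)
    (hs : ∀ i, ‖s i‖ ≤ β) (h : Tendsto (fun i => (conj (t i) * s i).re) l (𝓝 (α * β))) :
    Tendsto (fun i => ‖t i‖) l (𝓝 α) := by
  refine tendsto_of_tendsto_of_tendsto_of_le_of_le
    (by simpa only [mul_div_cancel_right₀ _ hβ.ne'] using h.div_const β) tendsto_const_nhds
    (fun i => ?_) ht
  rw [div_le_iff₀ hβ]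
  calc (conj (t i) * s i).re ≤ ‖conj (t i) * s i‖ := Complex.re_le_norm _
    _ = ‖t i‖ * ‖s i‖ := by rw [norm_mul, Complex.norm_conj]
    _ ≤ ‖t i‖ * β := mul_le_mul_of_nonneg_left (hs i) (norm_nonneg _)

lemma tendsto_norm_add_of_tendsto_re_conj_mul (hα : 0 < α) (hβ : 0 < β)
    (ht : ∀ i, ‖t i‖ ≤ α) (hs : ∀ i, ‖s i‖ ≤ β)
    (h : Tendsto (fun i => (conj (t i) * s i).re) l (𝓝 (α * β))) :
    Tendsto (fun i => ‖t i + s i‖) l (𝓝 (α + β)) := by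
  have hα' := tendsto_norm_left_of_tendsto_re_conj_mul hβ ht hs h
  have hβ' := tendsto_norm_left_of_tendsto_re_conj_mul hα hs ht
    (by simpa only [Complex.re_conj_mul_comm, mul_comm α] using h)
  have hsq : Tendsto (fun i => ‖t i + s i‖ ^ 2) l (𝓝 ((α + β) ^ 2)) := by
    convert ((hα'.pow 2).add (hβ'.pow 2)).add (h.const_mul 2) using 1
    · funext i
      exact Complex.norm_add_sq_eq _ _
    · congr 1
      ring
  simpa only [Real.sqrt_sq (norm_nonneg _), Real.sqrt_sq (add_pos hα hβ).le] using hsq.sqrt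
end

theorem exists_seq_tendsto_ciSup {ι α : Type*} [ConditionallyCompleteLinearOrder α]
    [TopologicalSpace α] [OrderTopology α] [FirstCountableTopology α] [Nonempty ι] {F : ι → α}
    (hF : BddAbove (Set.range F)) : ∃ p : ℕ → ι, Tendsto (F ∘ p) atTop (𝓝 (⨆ i, F i)) := by
  obtain ⟨u, -, hu, hmem⟩ := exists_seq_tendsto_sSup (Set.range_nonempty F) hF
  choose p hp using hmem
  exact ⟨p, by rwa [show F ∘ p = u from funext hp]⟩

theorem iSup_norm_add_eq_add_iff {ι : Type*} [Nonempty ι] {f g : ι → ℂ}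
    (hf : BddAbove (Set.range fun i => ‖f i‖)) (hg : BddAbove (Set.range fun i => ‖g i‖)) :
    ⨆ i, ‖f i + g i‖ = (⨆ i, ‖f i‖) + ⨆ i, ‖g i‖ ↔
      ∃ p : ℕ → ι, Tendsto (fun n => (conj (f (p n)) * g (p n)).re) atTop
        (𝓝 ((⨆ i, ‖f i‖) * ⨆ i, ‖g i‖)) := by
  have hfle : ∀ i, ‖f i‖ ≤ ⨆ i, ‖f i‖ := le_ciSup hf
  have hgle : ∀ i, ‖g i‖ ≤ ⨆ i, ‖g i‖ := le_ciSup hg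
  have hfgle : ∀ i, ‖f i + g i‖ ≤ (⨆ i, ‖f i‖) + ⨆ i, ‖g i‖ :=
    fun i => (norm_add_le _ _).trans (add_le_add (hfle i) (hgle i))
  have hfg : BddAbove (Set.range fun i => ‖f i + g i‖) := ⟨_, Set.forall_mem_range.2 hfgle⟩
  constructor
  · intro heq
    obtain ⟨p, hp⟩ := exists_seq_tendsto_ciSup hfg
    exact ⟨p, tendsto_re_conj_mul_of_tendsto_norm_add (fun n => hfle _) (fun n => hgle _)
      (heq ▸ hp)⟩
  · rintro ⟨p, hp⟩
    refine le_antisymm (ciSup_le hfgle) ?_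
    rcases (Real.iSup_nonneg fun i => norm_nonneg (f i)).eq_or_lt with hα | hα
    · have hf0 : ∀ i, f i = 0 := fun i => norm_le_zero_iff.1 (hα ▸ hfle i)
      simp [hf0]
    rcases (Real.iSup_nonneg fun i => norm_nonneg (g i)).eq_or_lt with hβ | hβ
    · have hg0 : ∀ i, g i = 0 := fun i => norm_le_zero_iff.1 (hβ ▸ hgle i)
      simp [hg0]
    exact le_of_tendsto' (tendsto_norm_add_of_tendsto_re_conj_mul hα hβ (fun n => hfle _)
      (fun n => hgle _) hp) fun n => le_ciSup hfg (p n)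


section
variable {𝕜 E : Type*} [RCLike 𝕜] [NormedAddCommGroup E] [InnerProductSpace 𝕜 E]

lemma exists_orthonormal_of_le_rank {n : ℕ} (h : n ≤ Module.rank 𝕜 E) :
    ∃ v : Fin n → E, Orthonormal 𝕜 v := by
  obtain ⟨v, hv⟩ := exists_linearIndependent_of_le_rank h
  exact ⟨_, InnerProductSpace.gramSchmidtNormed_orthonormal hv⟩

lemma Orthonormal.exists_norm_eq_one_inner_eq {v : Fin 2 → E} (hv : Orthonormal 𝕜 v)
    {q : 𝕜} (hq : ‖q‖ ≤ 1) :
    ∃ a b : 𝕜, ‖a • v 0 + b • v 1‖ = 1 ∧ ⟪a • v 0 + b • v 1, v 0⟫_𝕜 = q := by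
  have h01 : ⟪v 0, v 1⟫_𝕜 = 0 := hv.inner_eq_zero (by decide)
  refine ⟨conj q, (√(1 - ‖q‖ ^ 2) : 𝕜), ?_, ?_⟩
  · have horth : ⟪conj q • v 0, (√(1 - ‖q‖ ^ 2) : 𝕜) • v 1⟫_𝕜 = 0 := by
      rw [inner_smul_left, inner_smul_right, h01, mul_zero, mul_zero]
    rw [← pow_eq_one_iff_of_nonneg (norm_nonneg _) two_ne_zero, sq,
      norm_add_sq_eq_norm_sq_add_norm_sq_of_inner_eq_zero _ _ horth, norm_smul, norm_smul,
      hv.norm_eq_one, hv.norm_eq_one, RCLike.norm_conj, RCLike.norm_ofReal,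
      abs_of_nonneg (Real.sqrt_nonneg _), mul_one, mul_one,
      Real.mul_self_sqrt (by nlinarith [norm_nonneg q])]
    ring
  · rw [inner_add_left, inner_smul_left, inner_smul_left, inner_self_eq_norm_sq_to_K,
      hv.norm_eq_one, inner_eq_zero_symm.mp h01]
    simp
end

/-- `S_{q,A}(H)`. -/
def SqA (q : ℂ) (A : H →L[ℂ] H) : Set (H × H) :=
  {p | normA A p.1 = 1 ∧ normA A p.2 = 1 ∧ innA A p.1 p.2 = q}

lemma wqA_eq_iSup (q : ℂ) (A T : H →L[ℂ] H) :
    wqA q A T = ⨆ p : SqA q A, ‖innA A (T p.1.1) p.1.2‖ := by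
  rw [wqA, iSup]
  congr 1
  ext r
  simp [SqA, eq_comm, and_assoc]

namespace ContinuousLinearMap.IsPositive
variable [CompleteSpace H] {A : H →L[ℂ] H}

lemma sqrt_mul_sqrt_self (hA : A.IsPositive) : CFC.sqrt A * CFC.sqrt A = A :=
  CFC.sqrt_mul_sqrt_self A ((nonneg_iff_isPositive A).mpr hA)

lemma innA_eq_inner_sqrt (hA : A.IsPositive) (x y : H) :
    innA A x y = ⟪CFC.sqrt A y, CFC.sqrt A x⟫_ℂ := by
  have hB : IsSelfAdjoint (CFC.sqrt A) := (CFC.sqrt_nonneg A).isSelfAdjoint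
  conv_lhs => rw [innA, ← hA.sqrt_mul_sqrt_self]
  rw [mul_apply_eq_comp, ← adjoint_inner_right, hB.adjoint_eq]

lemma normA_eq_norm_sqrt (hA : A.IsPositive) (x : H) :
    normA A x = ‖CFC.sqrt A x‖ := by
  rw [normA, ← innA, hA.innA_eq_inner_sqrt, norm_eq_sqrt_re_inner (𝕜 := ℂ)]
  rfl

lemma range_le_range_sqrt (hA : A.IsPositive) :
    LinearMap.range (A : H →ₗ[ℂ] H) ≤
      LinearMap.range ((CFC.sqrt A : H →L[ℂ] H) : H →ₗ[ℂ] H) := by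
  conv_lhs => rw [← hA.sqrt_mul_sqrt_self]
  exact LinearMap.range_comp_le_range _ _

lemma innA_swap (hA : A.IsPositive) (x y : H) : innA A y x = conj (innA A x y) := by
  rw [hA.innA_eq_inner_sqrt, hA.innA_eq_inner_sqrt, inner_conj_symm]

lemma norm_innA_le (hA : A.IsPositive) (x y : H) : ‖innA A x y‖ ≤ normA A x * normA A y := by
  rw [hA.innA_eq_inner_sqrt, hA.normA_eq_norm_sqrt, hA.normA_eq_norm_sqrt, mul_comm]
  exact norm_inner_le_norm _ _

lemma exists_normA_eq_one_innA_eq (hA : A.IsPositive)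
    (hrank : 2 ≤ Module.rank ℂ (LinearMap.range (A : H →ₗ[ℂ] H))) {q : ℂ} (hq : ‖q‖ ≤ 1) :
    ∃ x y : H, normA A x = 1 ∧ normA A y = 1 ∧ innA A x y = q := by
  set B := CFC.sqrt A
  obtain ⟨v, hv⟩ := exists_orthonormal_of_le_rank (𝕜 := ℂ)
    (hrank.trans (Submodule.rank_mono hA.range_le_range_sqrt))
  have hw := hv.comp_linearIsometry (Submodule.subtypeₗᵢ _)
  obtain ⟨a, b, hab, habq⟩ := hw.exists_norm_eq_one_inner_eq hq
  choose u hu using fun i => LinearMap.mem_range.1 (v i).2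
  have hBu : ∀ i, B (u i) = v i := hu
  refine ⟨u 0, a • u 0 + b • u 1, ?_, ?_, ?_⟩
  · rw [hA.normA_eq_norm_sqrt, hBu]
    exact hw.norm_eq_one 0
  · rw [hA.normA_eq_norm_sqrt, map_add, map_smul, map_smul, hBu, hBu]
    exact hab
  · rw [hA.innA_eq_inner_sqrt, map_add, map_smul, map_smul, hBu, hBu]
    exact habq

lemma bddAbove_norm_innA (hA : A.IsPositive) {T : H →L[ℂ] H} {ξ : ℝ}
    (hT : ∀ x, normA A (T x) ≤ ξ * normA A x) (q : ℂ) :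
    BddAbove (Set.range fun p : SqA q A => ‖innA A (T p.1.1) p.1.2‖) := by
  refine ⟨ξ, Set.forall_mem_range.2 fun ⟨(x, y), hx, hy, _⟩ => ?_⟩
  calc ‖innA A (T x) y‖ ≤ normA A (T x) * normA A y := hA.norm_innA_le _ _
    _ ≤ ξ * normA A x * normA A y := mul_le_mul_of_nonneg_right (hT x) (Real.sqrt_nonneg _)
    _ = ξ := by rw [hx, hy, mul_one, mul_one]

end ContinuousLinearMap.IsPositive

open Filter in
theorem stmt_19 [CompleteSpace H] (A : H →L[ℂ] H) (hA : A.IsPositive)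
    (hrank : 2 ≤ Module.rank ℂ (LinearMap.range (A : H →ₗ[ℂ] H)))
    (q : ℂ) (hq : ‖q‖ ≤ 1) (T S : H →L[ℂ] H)
    (hT : ∃ ξ > (0:ℝ), ∀ x : H, normA A (T x) ≤ ξ * normA A x)
    (hS : ∃ ξ > (0:ℝ), ∀ x : H, normA A (S x) ≤ ξ * normA A x) :
    wqA q A (T + S) = wqA q A T + wqA q A S ↔
      ∃ x y : ℕ → H,
        (∀ n, normA A (x n) = 1 ∧ normA A (y n) = 1 ∧ innA A (x n) (y n) = q) ∧
        Tendsto (fun n => (innA A (y n) (T (x n)) * innA A (S (x n)) (y n)).re) atTop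
          (nhds (wqA q A T * wqA q A S)) := by
  obtain ⟨x₀, y₀, h₀⟩ := hA.exists_normA_eq_one_innA_eq hrank hq
  have : Nonempty (SqA q A) := ⟨⟨(x₀, y₀), h₀⟩⟩
  obtain ⟨ξ, -, hTξ⟩ := hT
  obtain ⟨η, -, hSη⟩ := hS
  have hadd : ∀ x y, innA A ((T + S) x) y = innA A (T x) y + innA A (S x) y := fun x y => by
    simp only [innA, add_apply, map_add, inner_add_right]
  simp only [wqA_eq_iSup, hadd]
  rw [iSup_norm_add_eq_add_iff (hA.bddAbove_norm_innA hTξ q) (hA.bddAbove_norm_innA hSη q)]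
  simp only [← hA.innA_swap]
  constructor
  · rintro ⟨p, hp⟩
    exact ⟨fun n => (p n).1.1, fun n => (p n).1.2, fun n => (p n).2, hp⟩
  · rintro ⟨x, y, hxy, hlim⟩
    exact ⟨fun n => ⟨(x n, y n), hxy n⟩, hlim⟩
end
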